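/- arXiv:2604.27989 — 2 statements merged into one kernel-verified Lean document; each statement's English description precedes it below -/
import Mathlib

section
/- Let d ≥ 1 and let p : X → ℝ^d be a map on a set X of d+2 elements such that the d·(d+2) coordinates of the points p(i), i ∈ X, are algebraically independent over ℚ. Then there exist reals a_i, i ∈ X, not all zero, with ∑_{i∈X} a_i p(i) = 0 and ∑_{i∈X} a_i = 0; this affine dependence is unique up to a scalar multiple; and every coefficient a_i is nonzero. -/
open scoped BigOperators

noncomputable section

variable {V : Type*}

/-- A framework `p : V → ℝ^d` is generic if the `d·|V|` coordinates of the points `p v`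
are algebraically independent over `ℚ`. -/
def IsGenericFramework [Fintype V] {d : ℕ} (p : V → EuclideanSpace ℝ (Fin d)) : Prop :=
  AlgebraicIndependent ℚ (fun vi : V × Fin d => p vi.1 vi.2)

/-- A framework is globally rigid if every framework with the same edge lengths arises
from it by an isometry of `ℝ^d`. -/
def IsGloballyRigid [Fintype V] {d : ℕ} (G : SimpleGraph V)
    (p : V → EuclideanSpace ℝ (Fin d)) : Prop :=
  ∀ q : V → EuclideanSpace ℝ (Fin d),
    (∀ u v, G.Adj u v → dist (q u) (q v) = dist (p u) (p v)) →
    ∃ T : EuclideanSpace ℝ (Fin d) ≃ᵢ EuclideanSpace ℝ (Fin d), ∀ v, q v = T (p v)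

/-- A graph is generically globally rigid in `ℝ^d` if every generic framework is globally rigid. -/
def IsGenericallyGloballyRigid [Fintype V] (d : ℕ) (G : SimpleGraph V) : Prop :=
  ∀ p : V → EuclideanSpace ℝ (Fin d), IsGenericFramework p → IsGloballyRigid G p

/-- Edge-minimal generically globally rigid. -/
def IsMinimallyGenericallyGloballyRigid [Fintype V] (d : ℕ) (G : SimpleGraph V) : Prop :=
  IsGenericallyGloballyRigid d G ∧
    ∀ e ∈ G.edgeSet, ¬ IsGenericallyGloballyRigid d (G.deleteEdges {e})

/-- Equilibrium stress matrix of the framework `(G, p)`. -/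
def IsStressMatrix [Fintype V] {d : ℕ} (G : SimpleGraph V)
    (p : V → EuclideanSpace ℝ (Fin d)) (Ω : Matrix V V ℝ) : Prop :=
  Ω.IsSymm ∧ (∀ u v : V, u ≠ v → ¬ G.Adj u v → Ω u v = 0) ∧
    (∀ u : V, ∑ v : V, Ω u v = 0) ∧
    (∀ u : V, ∑ v : V, Ω u v • p v = 0)

/-- The row of the rigidity matrix corresponding to an edge, as a block vector with one
`ℝ^d` block per vertex: the block of `u` is `p u - p w`, the block of `w` is `p w - p u`,
and all other blocks vanish. -/
def rigidityRow [DecidableEq V] {d : ℕ} (p : V → EuclideanSpace ℝ (Fin d)) :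
    Sym2 V → (V → EuclideanSpace ℝ (Fin d)) :=
  Sym2.lift ⟨fun u w v => if v = u then p u - p w else if v = w then p w - p u else 0, by
    intro u w
    rcases eq_or_ne u w with rfl | huw
    · rfl
    funext v
    by_cases hu : v = u <;> by_cases hw : v = w
    · exact absurd (hu.symm.trans hw) huw
    · simp [hu, hw, huw, huw.symm]
    · simp [hu, hw, huw, huw.symm]
    · simp [hu, hw]⟩

/-- The rows of the rigidity matrix of `(G,p)` indexed by `C` are linearly independent. -/
def RowsLinIndep [DecidableEq V] {d : ℕ} (p : V → EuclideanSpace ℝ (Fin d))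
    (C : Set (Sym2 V)) : Prop :=
  LinearIndependent ℝ (fun e : C => rigidityRow p (e : Sym2 V))

/-- `C` is an `R_d`-circuit of `G`. -/
def IsRdCircuit [Fintype V] [DecidableEq V] (d : ℕ) (G : SimpleGraph V)
    (C : Set (Sym2 V)) : Prop :=
  C ⊆ G.edgeSet ∧
    ∀ p : V → EuclideanSpace ℝ (Fin d), IsGenericFramework p →
      ¬ RowsLinIndep p C ∧ ∀ C' ⊂ C, RowsLinIndep p C'

/-- The symmetric matrix associated with coefficients `ω` supported on a set `C` of edges:
off-diagonal entries are `ω s(u,v)` for `s(u,v) ∈ C` and `0` otherwise, and the diagonal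
entries make all row sums vanish. -/
def stressOfCoeffs [Fintype V] [DecidableEq V] (C : Finset (Sym2 V)) (ω : Sym2 V → ℝ) :
    Matrix V V ℝ :=
  Matrix.of fun u v =>
    if u = v then -∑ w ∈ Finset.univ.erase u, (if s(u, w) ∈ C then ω s(u, w) else 0)
    else if s(u, v) ∈ C then ω s(u, v) else 0

/-!
Pass to homogeneous coordinates `(1, p i) ∈ ℝ^(d+1)`: affine dependences of the points are
exactly linear relations among these `d + 2` vectors, so one exists by counting dimensions.
Any `d + 1` of them are linearly independent, because their determinant is the evaluation of
a polynomial with rational coefficients that is nonzero (it equals `1` at the vertices of the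
standard simplex), and algebraically independent coordinates are not a zero of it. Hence a
relation vanishing at one index vanishes everywhere: every coefficient of a nonzero relation
is nonzero, and any relation minus a suitable multiple of a fixed one is zero.
-/

section

open Matrix Module

theorem det_of_vecCons_one_standardSimplex {R : Type*} [CommRing R] (d : ℕ) :
    (Matrix.of fun i : Fin (d + 1) => vecCons (1 : R) fun j => if i = j.succ then 1 else 0).det
      = 1 := by
  rw [det_of_isLowerTriangular]
  · refine Finset.prod_eq_one fun i _ => ?_
    cases i using Fin.cases <;> simp
  · intro i j hij
    cases j using Fin.cases with
    | zero => exact absurd hij (Fin.not_lt_zero _)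
    | succ j => simp [(OrderDual.toDual_lt_toDual.mp hij).ne]

theorem AlgebraicIndependent.linearIndependent_vecCons_one_fin {R K : Type*} [CommRing R]
    [Field K] [Algebra R K] {d : ℕ} {x : Fin (d + 1) → Fin d → K}
    (hx : AlgebraicIndependent R fun ij : Fin (d + 1) × Fin d => x ij.1 ij.2) :
    LinearIndependent K fun i => vecCons 1 (x i) := by
  let N : Matrix (Fin (d + 1)) (Fin (d + 1)) (MvPolynomial (Fin (d + 1) × Fin d) R) :=
    .of fun i => vecCons 1 fun j => .X (i, j)
  have det_eval (z : Fin (d + 1) × Fin d → K) :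
      (Matrix.of fun i => vecCons 1 fun j => z (i, j)).det = MvPolynomial.aeval z N.det := by
    rw [← AlgHom.coe_toRingHom, RingHom.map_det]
    congr 1
    ext i j
    cases j using Fin.cases <;> simp [N]
  -- Evaluate at the standard simplex: vertex `0` is the origin, vertex `j.succ` is `e_j`.
  have hN : N.det ≠ 0 := fun h => by
    simpa [h] using (det_eval fun ij => if ij.1 = ij.2.succ then 1 else 0).symm.trans
      (det_of_vecCons_one_standardSimplex d)
  refine linearIndependent_rows_iff_isUnit (A := .of fun i => vecCons 1 (x i)) |>.mpr ?_
  rw [isUnit_iff_isUnit_det, isUnit_iff_ne_zero, det_eval fun ij => x ij.1 ij.2]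
  exact fun h => hN (hx (h.trans (map_zero _).symm))

theorem AlgebraicIndependent.linearIndependent_vecCons_one {R K ι : Type*} [CommRing R]
    [Field K] [Algebra R K] [Fintype ι] {d : ℕ} (hι : Fintype.card ι = d + 1)
    {x : ι → Fin d → K} (hx : AlgebraicIndependent R fun ij : ι × Fin d => x ij.1 ij.2) :
    LinearIndependent K fun i => vecCons 1 (x i) := by
  let e : ι ≃ Fin (d + 1) := Fintype.equivFinOfCardEq hι
  refine (linearIndependent_equiv e.symm).mp ?_
  exact linearIndependent_vecCons_one_fin (x := x ∘ e.symm)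
    (hx.comp (fun ij : Fin (d + 1) × Fin d => (e.symm ij.1, ij.2))
      (e.symm.prodCongr (Equiv.refl _)).injective)

theorem LinearIndependent.eq_zero_of_sum_smul_eq_zero_of_apply_eq_zero {R M X : Type*}
    [Ring R] [AddCommGroup M] [Module R M] [Fintype X] [DecidableEq X] {v : X → M} {i₀ : X}
    (hv : LinearIndependent R fun i : {i // i ≠ i₀} => v i) {b : X → R}
    (hb : ∑ i, b i • v i = 0) (hb₀ : b i₀ = 0) : b = 0 := by
  rw [Fintype.sum_eq_add_sum_subtype_ne _ i₀, hb₀, zero_smul, zero_add] at hb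
  have hb_ne := Fintype.linearIndependent_iff.mp hv (fun i : {i // i ≠ i₀} => b i) hb
  funext i
  by_cases hi : i = i₀
  · exact hi ▸ hb₀
  · exact hb_ne ⟨i, hi⟩

theorem exists_relation_forall_ne_zero_of_linearIndependent_compl {K V X : Type*} [Field K]
    [AddCommGroup V] [Module K V] [Module.Finite K V] [Fintype X] [DecidableEq X] {v : X → V}
    (hcard : finrank K V < Fintype.card X)
    (hv : ∀ i₀ : X, LinearIndependent K fun i : {i // i ≠ i₀} => v i) :
    ∃ a : X → K, ∑ i, a i • v i = 0 ∧ (∀ i, a i ≠ 0) ∧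
      ∀ b : X → K, ∑ i, b i • v i = 0 → ∃ c : K, b = c • a := by
  obtain ⟨a, ha, i₁, ha₁⟩ := Fintype.not_linearIndependent_iff.mp fun h =>
    h.fintype_card_le_finrank.not_gt hcard
  have ha_ne (i : X) : a i ≠ 0 := fun hai =>
    ha₁ (congrFun ((hv i).eq_zero_of_sum_smul_eq_zero_of_apply_eq_zero ha hai) i₁)
  refine ⟨a, ha, ha_ne, fun b hb => ⟨b i₁ / a i₁, sub_eq_zero.mp ?_⟩⟩
  refine (hv i₁).eq_zero_of_sum_smul_eq_zero_of_apply_eq_zero ?_ ?_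
  · simp only [Pi.sub_apply, Pi.smul_apply, smul_eq_mul, sub_smul, mul_smul,
      Finset.sum_sub_distrib, ← Finset.smul_sum, hb, ha, smul_zero, sub_zero]
  · simp [div_mul_cancel₀ _ (ha_ne i₁)]

theorem sum_smul_vecCons_one_eq_zero_iff {R X : Type*} [Semiring R] [Fintype X] {d : ℕ}
    (b : X → R) (x : X → Fin d → R) :
    ∑ i, b i • vecCons 1 (x i) = 0 ↔ ∑ i, b i = 0 ∧ ∑ i, b i • x i = 0 := by
  have : ∑ i, b i • vecCons 1 (x i) = vecCons (∑ i, b i) (∑ i, b i • x i) := by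
    ext j
    cases j using Fin.cases <;> simp [Finset.sum_apply]
  rw [this, cons_eq_zero_iff]

end

theorem generic_points_affine_dependence_general {X : Type*} [Fintype X] {d : ℕ}
    (hX : Fintype.card X = d + 2) (p : X → EuclideanSpace ℝ (Fin d))
    (hp : AlgebraicIndependent ℚ (fun xi : X × Fin d => p xi.1 xi.2)) :
    ∃ a : X → ℝ, a ≠ 0 ∧ (∑ i, a i • p i = 0) ∧ (∑ i, a i = 0) ∧
      (∀ i, a i ≠ 0) ∧
      ∀ b : X → ℝ, (∑ i, b i • p i = 0) → (∑ i, b i = 0) →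
        ∃ c : ℝ, b = c • a := by
  classical
  let v (i : X) : Fin (d + 1) → ℝ := Matrix.vecCons 1 (p i)
  have relation_iff (b : X → ℝ) :
      ∑ i, b i • v i = 0 ↔ ∑ i, b i • p i = 0 ∧ ∑ i, b i = 0 := by
    rw [sum_smul_vecCons_one_eq_zero_iff, and_comm,
      ← WithLp.ofLp_eq_zero 2 (x := ∑ i, b i • p i), WithLp.ofLp_sum]
    simp
  have hv (i₀ : X) : LinearIndependent ℝ fun i : {i // i ≠ i₀} => v i :=
    AlgebraicIndependent.linearIndependent_vecCons_one (x := fun i : {i // i ≠ i₀} => p i)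
      (by simp [Fintype.card_subtype_compl, hX])
      (hp.comp (fun ij : {i // i ≠ i₀} × Fin d => (ij.1.1, ij.2))
        (Subtype.val_injective.prodMap Function.injective_id))
  obtain ⟨a, ha, ha_ne, ha_span⟩ :=
    exists_relation_forall_ne_zero_of_linearIndependent_compl (by simp [hX]) hv
  obtain ⟨ha_points, ha_sum⟩ := (relation_iff a).mp ha
  obtain ⟨i⟩ : Nonempty X := Fintype.card_pos_iff.mp (by omega)
  exact ⟨a, fun h => ha_ne i (congrFun h i), ha_points, ha_sum, ha_ne,
    fun b hb_points hb_sum => ha_span b ((relation_iff b).mpr ⟨hb_points, hb_sum⟩)⟩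

/-- `d+2` generic points in `ℝ^d` have a unique (up to scaling) affine
dependence, and all of its coefficients are nonzero. -/
theorem generic_points_affine_dependence {X : Type*} [Fintype X] {d : ℕ} (hd : 1 ≤ d)
    (hX : Fintype.card X = d + 2) (p : X → EuclideanSpace ℝ (Fin d))
    (hp : AlgebraicIndependent ℚ (fun xi : X × Fin d => p xi.1 xi.2)) :
    ∃ a : X → ℝ, a ≠ 0 ∧ (∑ i, a i • p i = 0) ∧ (∑ i, a i = 0) ∧
      (∀ i, a i ≠ 0) ∧
      ∀ b : X → ℝ, (∑ i, b i • p i = 0) → (∑ i, b i = 0) →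
        ∃ c : ℝ, b = c • a :=
  generic_points_affine_dependence_general hX p hp

end
end

section
/- Let r ≥ 1 and let Ω, A be square real matrices of the same size with rank Ω = r and rank A ≤ 1. Let Ω* be an r × r submatrix of Ω with det Ω* ≠ 0, given by a set I of rows and a set J of columns, and let A* = A[I,J] be the corresponding submatrix of A. Then there is at most one real number c such that rank(Ω − c·A) < r; indeed det(Ω* − t·A*) is a polynomial of degree at most 1 in t with constant coefficient det Ω* ≠ 0, and rank(Ω − c·A) < r forces det(Ω* − c·A*) = 0. -/
open scoped BigOperators

noncomputable section

variable {V : Type*}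

section AuxRankLemmas

open Matrix Set Submodule

private lemma rank_submatrix_le_gen {m n m' n' : Type*} [Fintype m] [Fintype n] [Fintype m'] [Fintype n']
    (M : Matrix m n ℝ) (f : m' → m) (g : n' → n) :
    (M.submatrix f g).rank ≤ M.rank := by
  rw [Matrix.rank, Matrix.rank, Matrix.range_mulVecLin, Matrix.range_mulVecLin]
  have hsub : Set.range (M.submatrix f g)ᵀ ⊆ (LinearMap.funLeft ℝ ℝ f) '' (Set.range Mᵀ) := by
    rintro _ ⟨j, rfl⟩
    exact ⟨Mᵀ (g j), ⟨g j, rfl⟩, rfl⟩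
  calc Module.finrank ℝ (span ℝ (Set.range (M.submatrix f g)ᵀ))
      ≤ Module.finrank ℝ (span ℝ ((LinearMap.funLeft ℝ ℝ f) '' (Set.range Mᵀ))) :=
        Submodule.finrank_mono (span_mono hsub)
    _ = Module.finrank ℝ ((span ℝ (Set.range Mᵀ)).map (LinearMap.funLeft ℝ ℝ f)) := by
        rw [Submodule.span_image]
    _ ≤ Module.finrank ℝ (span ℝ (Set.range Mᵀ)) := Submodule.finrank_map_le _ _

private lemma rank_le_one_decomp {r : ℕ} (B : Matrix (Fin r) (Fin r) ℝ) (hB : B.rank ≤ 1) :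
    ∃ u v : Fin r → ℝ, ∀ i j, B i j = u i * v j := by
  rw [Matrix.rank, Matrix.range_mulVecLin] at hB
  obtain ⟨v₀, hv₀⟩ := finrank_le_one_iff.mp hB
  choose c hc using fun j => hv₀ ⟨Bᵀ j, subset_span ⟨j, rfl⟩⟩
  refine ⟨(v₀ : Fin r → ℝ), c, fun i j => ?_⟩
  have h1 : ((c j • v₀ : span ℝ (Set.range Bᵀ)) : Fin r → ℝ) i = Bᵀ j i := by
    rw [hc j]
  simp only [SetLike.val_smul, Pi.smul_apply, smul_eq_mul] at h1
  rw [show B i j = Bᵀ j i from rfl, ← h1, mul_comm]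

private lemma det_sub_smul_rank_one {r : ℕ} (D : Matrix (Fin r) (Fin r) ℝ) (hD : IsUnit D.det)
    (u v : Fin r → ℝ) (t : ℝ) :
    (D - t • Matrix.of (fun i j => u i * v j)).det
      = D.det + (-(D.det * ((v ᵥ* D⁻¹) ⬝ᵥ u))) * t := by
  have key : D - t • Matrix.of (fun i j => u i * v j)
      = D + Matrix.replicateCol (Fin 1) (-t • u) * Matrix.replicateRow (Fin 1) v := by
    ext i j
    simp [Matrix.mul_apply]
    ring
  rw [key, Matrix.det_add_mul _ _ hD, Matrix.det_fin_one]
  simp [Matrix.mul_apply, Matrix.one_apply, dotProduct, Matrix.vecMul, Finset.mul_sum,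
    Finset.sum_mul]
  ring_nf
  rw [Finset.mul_sum]
  congr 1
  apply Finset.sum_congr rfl
  intro x _
  rw [Finset.mul_sum]
  apply Finset.sum_congr rfl
  intro y _
  ring

end AuxRankLemmas

/-- at most one scalar `c` can drop the rank of `Ω - c • A` below `r` when
`rank Ω = r`, `rank A ≤ 1` and `Ω` has an invertible `r × r` submatrix. -/
theorem at_most_one_rank_dropping_scalar {n r : ℕ} (hr : 1 ≤ r)
    (Ω A : Matrix (Fin n) (Fin n) ℝ) (hΩ : Ω.rank = r) (hA : A.rank ≤ 1)
    (f g : Fin r → Fin n) (hf : Function.Injective f) (hg : Function.Injective g)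
    (hdet : (Ω.submatrix f g).det ≠ 0) :
    (∃ β : ℝ, ∀ t : ℝ,
        ((Ω - t • A).submatrix f g).det = (Ω.submatrix f g).det + β * t) ∧
      (∀ c : ℝ, (Ω - c • A).rank < r → ((Ω - c • A).submatrix f g).det = 0) ∧
      ∀ c c' : ℝ, (Ω - c • A).rank < r → (Ω - c' • A).rank < r → c = c' := by
  classical
  set D := Ω.submatrix f g with hD
  have hDu : IsUnit D.det := isUnit_iff_ne_zero.mpr hdet
  obtain ⟨u, v, huv⟩ := rank_le_one_decomp (A.submatrix f g)
    (le_trans (rank_submatrix_le_gen A f g) hA)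
  have hAsub : A.submatrix f g = Matrix.of (fun i j => u i * v j) := by
    ext i j; exact huv i j
  have hsub : ∀ t : ℝ, (Ω - t • A).submatrix f g = D - t • Matrix.of (fun i j => u i * v j) := by
    intro t
    ext i j
    simp [hD, Matrix.submatrix_apply, Matrix.sub_apply, ← huv i j]
  set β : ℝ := -(D.det * (dotProduct (Matrix.vecMul v D⁻¹) u)) with hβ
  have hlin : ∀ t : ℝ, ((Ω - t • A).submatrix f g).det = D.det + β * t := by
    intro t
    rw [hsub t, det_sub_smul_rank_one D hDu u v t]
  have hzero : ∀ c : ℝ, (Ω - c • A).rank < r → ((Ω - c • A).submatrix f g).det = 0 := by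
    intro c hc
    by_contra hne
    have h1 : ((Ω - c • A).submatrix f g).rank = r := by
      rw [Matrix.rank_of_isUnit _ ((Matrix.isUnit_iff_isUnit_det _).mpr
        (isUnit_iff_ne_zero.mpr hne))]
      simp
    have h2 : ((Ω - c • A).submatrix f g).rank ≤ (Ω - c • A).rank :=
      rank_submatrix_le_gen _ f g
    omega
  refine ⟨⟨β, hlin⟩, hzero, fun c c' hc hc' => ?_⟩
  have e1 : D.det + β * c = 0 := by rw [← hlin c]; exact hzero c hc
  have e2 : D.det + β * c' = 0 := by rw [← hlin c']; exact hzero c' hc'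
  have hβne : β ≠ 0 := by
    intro h0
    rw [h0, zero_mul, add_zero] at e1
    exact hdet e1
  have : β * c = β * c' := by linarith
  exact mul_left_cancel₀ hβne this


end
end
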